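/- Let Π = (R, CR) be a finite ground CR-program over a set of atoms At, and let τ(Π) be its weak-constraint translation using fresh atoms appl_1, …, appl_N. If S is an answer set of the weak-constraint program τ(Π), then the set of literals in S not formed from any of the fresh atoms appl_1, …, appl_N is an answer set of the CR-program Π. -/
import Mathlib


/-- A literal is an atom or its classical negation. -/
inductive Lit (α : Type) where
  | pos : α → Lit α
  | neg : α → Lit α
deriving DecidableEq

/-- The atom a literal is formed from. -/
def Lit.atom {α : Type} : Lit α → α
  | .pos a => a
  | .neg a => a

/-- A set of literals is consistent if it contains no complementary pair. -/
def Consistent {α : Type} (S : Set (Lit α)) : Prop :=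
  ∀ a : α, ¬ (Lit.pos a ∈ S ∧ Lit.neg a ∈ S)

/-- A ground rule  l₀ ∨ … ∨ l_m ← l_{m+1}, …, l_k, not l_{k+1}, …, not l_n. -/
structure Rule (α : Type) where
  head : List (Lit α)
  pbody : List (Lit α)
  nbody : List (Lit α)
deriving DecidableEq

/-- `S` satisfies a rule. -/
def Satisfies {α : Type} (S : Set (Lit α)) (r : Rule α) : Prop :=
  ((∀ l ∈ r.pbody, l ∈ S) ∧ (∀ l ∈ r.nbody, l ∉ S)) → ∃ l ∈ r.head, l ∈ S

/-- The reduct of a ground program relative to `S`. -/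
def reduct {α : Type} (P : Set (Rule α)) (S : Set (Lit α)) : Set (Rule α) :=
  {r' | ∃ r ∈ P, (∀ l ∈ r.nbody, l ∉ S) ∧ r' = ⟨r.head, r.pbody, []⟩}

/-- `S` satisfies all rules of `P`. -/
def SatAll {α : Type} (P : Set (Rule α)) (S : Set (Lit α)) : Prop :=
  ∀ r ∈ P, Satisfies S r

/-- `S` is an answer set of the ground program `P`: `S` is consistent and minimal
among consistent sets of literals satisfying all rules of the reduct `P^S`. -/
def IsAnswerSet {α : Type} (P : Set (Rule α)) (S : Set (Lit α)) : Prop :=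
  Consistent S ∧ SatAll (reduct P S) S ∧
    ∀ T, Consistent T → SatAll (reduct P S) T → T ⊆ S → T = S

/-- A cr-rule  l₀ ←⁺ l_1, …, l_k, not l_{k+1}, …, not l_n, with a single literal head. -/
structure CrRule (α : Type) where
  head : Lit α
  pbody : List (Lit α)
  nbody : List (Lit α)
deriving DecidableEq

/-- α(r): the regular rule obtained from a cr-rule by replacing ←⁺ with ←. -/
def CrRule.alpha {α : Type} (r : CrRule α) : Rule α :=
  ⟨[r.head], r.pbody, r.nbody⟩

/-- `X` is an abductive support of the CR-program `(R, CRs)`. -/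
def IsAbductiveSupport {α : Type} [DecidableEq α]
    (R : Finset (Rule α)) (CRs X : Finset (CrRule α)) : Prop :=
  X ⊆ CRs ∧ (∃ S, IsAnswerSet ((R : Set (Rule α)) ∪ ↑(X.image CrRule.alpha)) S) ∧
    ∀ Y ⊆ CRs, (∃ S, IsAnswerSet ((R : Set (Rule α)) ∪ ↑(Y.image CrRule.alpha)) S) → X.card ≤ Y.card

/-- `A` is an answer set of the CR-program `(R, CRs)`. -/
def IsCrAnswerSet {α : Type} [DecidableEq α]
    (R : Finset (Rule α)) (CRs : Finset (CrRule α)) (A : Set (Lit α)) : Prop :=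
  ∃ X, IsAbductiveSupport R CRs X ∧ IsAnswerSet ((R : Set (Rule α)) ∪ ↑(X.image CrRule.alpha)) A

/-- A weak constraint  :~ l_1, …, l_k, not l_{k+1}, …, not l_n. -/
structure WeakConstraint (α : Type) where
  pbody : List (Lit α)
  nbody : List (Lit α)
deriving DecidableEq

/-- `S` violates a weak constraint. -/
def ViolatesWC {α : Type} (S : Set (Lit α)) (w : WeakConstraint α) : Prop :=
  (∀ l ∈ w.pbody, l ∈ S) ∧ (∀ l ∈ w.nbody, l ∉ S)

/-- The number of weak constraints of `W` violated by `S`. -/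
noncomputable def violatedCount {α : Type} (W : Finset (WeakConstraint α))
    (S : Set (Lit α)) : ℕ :=
  {w : WeakConstraint α | w ∈ W ∧ ViolatesWC S w}.ncard

/-- `S` is an answer set of the weak-constraint program `(P, W)`. -/
def IsWcAnswerSet {α : Type} (P : Set (Rule α)) (W : Finset (WeakConstraint α))
    (S : Set (Lit α)) : Prop :=
  IsAnswerSet P S ∧ ∀ T, IsAnswerSet P T → violatedCount W S ≤ violatedCount W T

section Translation

variable {α : Type} [DecidableEq α] {N : ℕ}

/-- Atom `a` occurs in the rule `r`. -/
def OccursInRule (a : α) (r : Rule α) : Prop :=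
  ∃ l ∈ r.head ++ r.pbody ++ r.nbody, l.atom = a

/-- Atom `a` occurs in the cr-rule `r`. -/
def OccursInCrRule (a : α) (r : CrRule α) : Prop :=
  ∃ l ∈ r.head :: (r.pbody ++ r.nbody), l.atom = a

/-- The atoms `appl i` are distinct and fresh: they do not occur in the
CR-program `(R, cr 1, …, cr N)`. -/
def FreshAppl (R : Finset (Rule α)) (cr : Fin N → CrRule α) (appl : Fin N → α) : Prop :=
  Function.Injective appl ∧
    ∀ i : Fin N, (∀ r ∈ R, ¬ OccursInRule (appl i) r) ∧
      (∀ j : Fin N, ¬ OccursInCrRule (appl i) (cr j))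

/-- The rule  appl_i ∨ ¬appl_i ← B_i. -/
def choiceRule (cr : Fin N → CrRule α) (appl : Fin N → α) (i : Fin N) : Rule α :=
  ⟨[Lit.pos (appl i), Lit.neg (appl i)], (cr i).pbody, (cr i).nbody⟩

/-- The rule  h_i ← appl_i, B_i. -/
def applRule (cr : Fin N → CrRule α) (appl : Fin N → α) (i : Fin N) : Rule α :=
  ⟨[(cr i).head], Lit.pos (appl i) :: (cr i).pbody, (cr i).nbody⟩

/-- The hard part of the translation τ(Π). -/
def tauHard (R : Finset (Rule α)) (cr : Fin N → CrRule α) (appl : Fin N → α) :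
    Set (Rule α) :=
  ↑R ∪ Set.range (choiceRule cr appl) ∪ Set.range (applRule cr appl)

/-- The i-th weak constraint  :~ appl_i, B_i  of the translation τ(Π). -/
def wcOf (cr : Fin N → CrRule α) (appl : Fin N → α) (i : Fin N) : WeakConstraint α :=
  ⟨Lit.pos (appl i) :: (cr i).pbody, (cr i).nbody⟩

/-- The set of weak constraints of the translation τ(Π). -/
def tauWeak (cr : Fin N → CrRule α) (appl : Fin N → α) : Finset (WeakConstraint α) :=
  Finset.image (wcOf cr appl) Finset.univ

/-- The literals of `S` not formed from any of the fresh atoms `appl i`. -/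
def restrictAway (appl : Fin N → α) (S : Set (Lit α)) : Set (Lit α) :=
  {l ∈ S | ∀ i : Fin N, l.atom ≠ appl i}

end Translation

section Helpers

set_option linter.unusedSectionVars false

variable {α : Type} [DecidableEq α] {N : ℕ}

/-- A literal not formed from any fresh atom. -/
def NoAppl (appl : Fin N → α) (l : Lit α) : Prop := ∀ i : Fin N, l.atom ≠ appl i

lemma fresh_R {R : Finset (Rule α)} {cr : Fin N → CrRule α} {appl : Fin N → α}
    (hf : FreshAppl R cr appl) {r : Rule α} (hr : r ∈ R) {l : Lit α}
    (hl : l ∈ r.head ∨ l ∈ r.pbody ∨ l ∈ r.nbody) : NoAppl appl l := by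
  intro i he
  exact (hf.2 i).1 r hr ⟨l, by simpa using hl, he⟩

lemma fresh_cr {R : Finset (Rule α)} {cr : Fin N → CrRule α} {appl : Fin N → α}
    (hf : FreshAppl R cr appl) (j : Fin N) {l : Lit α}
    (hl : l = (cr j).head ∨ l ∈ (cr j).pbody ∨ l ∈ (cr j).nbody) : NoAppl appl l := by
  intro i he
  exact (hf.2 i).2 j ⟨l, by simpa using hl, he⟩

lemma wcOf_injective {cr : Fin N → CrRule α} {appl : Fin N → α}
    (hinj : Function.Injective appl) : Function.Injective (wcOf cr appl) := by
  intro i j h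
  have := congrArg WeakConstraint.pbody h
  simp only [wcOf, List.cons.injEq, Lit.pos.injEq] at this
  exact hinj this.1

/-- Counting violated weak constraints of the translation. -/
lemma violatedCount_tauWeak {cr : Fin N → CrRule α} {appl : Fin N → α}
    (hinj : Function.Injective appl) (S : Set (Lit α)) :
    violatedCount (tauWeak cr appl) S
      = Set.ncard {i : Fin N | ViolatesWC S (wcOf cr appl i)} := by
  have hset : {w : WeakConstraint α | w ∈ tauWeak cr appl ∧ ViolatesWC S w}
      = (wcOf cr appl) '' {i : Fin N | ViolatesWC S (wcOf cr appl i)} := by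
    ext w
    simp only [Set.mem_setOf_eq, Set.mem_image, tauWeak, Finset.mem_image,
      Finset.mem_univ, true_and]
    constructor
    · rintro ⟨⟨i, rfl⟩, hv⟩; exact ⟨i, hv, rfl⟩
    · rintro ⟨i, hv, rfl⟩; exact ⟨⟨i, rfl⟩, hv⟩
  rw [violatedCount, hset, Set.ncard_image_of_injective _ (wcOf_injective hinj)]

/-- Answer sets of `R ∪ α(Y)` contain no literal over a fresh atom. -/
lemma noAppl_of_answerSet {R : Finset (Rule α)} {cr : Fin N → CrRule α} {appl : Fin N → α}
    (hf : FreshAppl R cr appl) {Y : Finset (CrRule α)}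
    (hY : Y ⊆ Finset.image cr Finset.univ) {T : Set (Lit α)}
    (hT : IsAnswerSet ((R : Set (Rule α)) ∪ ↑(Y.image CrRule.alpha)) T) :
    ∀ l ∈ T, NoAppl appl l := by
  obtain ⟨hc, hsat, hmin⟩ := hT
  set T₀ : Set (Lit α) := {l ∈ T | NoAppl appl l} with hT₀
  have hsub : T₀ ⊆ T := fun l hl => hl.1
  have hcons : Consistent T₀ := fun a ha => hc a ⟨ha.1.1, ha.2.1⟩
  have hsat₀ : SatAll (reduct ((R : Set (Rule α)) ∪ ↑(Y.image CrRule.alpha)) T) T₀ := by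
    rintro r' ⟨r, hr, hn, rfl⟩ ⟨hp, -⟩
    have hp' : ∀ l ∈ r.pbody, l ∈ T := fun l hl => hsub (hp l hl)
    obtain ⟨l, hlh, hlT⟩ := hsat _ ⟨r, hr, hn, rfl⟩ ⟨hp', by simp⟩
    refine ⟨l, hlh, hlT, ?_⟩
    rcases hr with hr | hr
    · exact fresh_R hf hr (Or.inl hlh)
    · obtain ⟨y, hy, rfl⟩ := by simpa using hr
      obtain ⟨j, -, rfl⟩ := by simpa using hY hy
      have : l = (cr j).head := by simpa [CrRule.alpha] using hlh
      exact fresh_cr hf j (Or.inl this)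
  have := hmin T₀ hcons hsat₀ hsub
  intro l hl
  rw [← this] at hl
  exact hl.2

/-- If `S` is an answer set of the hard part and `appl_i ∈ S`, then the body
of the i-th cr-rule is satisfied by `S`. -/
lemma bodySat_of_pos {R : Finset (Rule α)} {cr : Fin N → CrRule α} {appl : Fin N → α}
    (hf : FreshAppl R cr appl) {S : Set (Lit α)}
    (hS : IsAnswerSet (tauHard R cr appl) S) {i : Fin N}
    (hi : Lit.pos (appl i) ∈ S) :
    (∀ l ∈ (cr i).pbody, l ∈ S) ∧ (∀ l ∈ (cr i).nbody, l ∉ S) := by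
  obtain ⟨hc, hsat, hmin⟩ := hS
  by_contra hbody
  set Sm : Set (Lit α) := S \ {Lit.pos (appl i)} with hSm
  have hsub : Sm ⊆ S := Set.diff_subset
  have hcons : Consistent Sm := fun a ha => hc a ⟨ha.1.1, ha.2.1⟩
  have hsatm : SatAll (reduct (tauHard R cr appl) S) Sm := by
    rintro r' ⟨r, hr, hn, rfl⟩ ⟨hp, -⟩
    have hp' : ∀ l ∈ r.pbody, l ∈ S := fun l hl => hsub (hp l hl)
    rcases hr with (hr | hr) | hr
    · -- r ∈ R
      obtain ⟨l, hlh, hlT⟩ := hsat _ ⟨r, Or.inl (Or.inl hr), hn, rfl⟩ ⟨hp', by simp⟩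
      have hna : NoAppl appl l := fresh_R hf hr (Or.inl hlh)
      exact ⟨l, hlh, hlT, by simp [Set.mem_singleton_iff]; rintro rfl; exact hna i rfl⟩
    · -- choice rule
      obtain ⟨j, rfl⟩ := hr
      rcases eq_or_ne j i with rfl | hne
      · exact absurd ⟨fun l hl => hp' l hl, fun l hl hls => hn l hl hls⟩ hbody
      · obtain ⟨l, hlh, hlT⟩ := hsat _ ⟨_, Or.inl (Or.inr ⟨j, rfl⟩), hn, rfl⟩ ⟨hp', by simp⟩
        refine ⟨l, hlh, hlT, ?_⟩
        simp only [choiceRule, List.mem_cons, List.mem_singleton] at hlh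
        rcases hlh with rfl | rfl | h
        · simp only [Set.mem_singleton_iff, Lit.pos.injEq]
          exact fun h => hne (hf.1 h)
        · simp
        · simp at h
    · -- appl rule
      obtain ⟨j, rfl⟩ := hr
      rcases eq_or_ne j i with rfl | hne
      · have hmem : Lit.pos (appl j) ∈ Sm := hp _ (by simp [applRule])
        exact absurd rfl hmem.2
      · obtain ⟨l, hlh, hlT⟩ := hsat _ ⟨_, Or.inr ⟨j, rfl⟩, hn, rfl⟩ ⟨hp', by simp⟩
        have hl' : l = (cr j).head := by simpa [applRule] using hlh
        have hna : NoAppl appl l := fresh_cr hf j (Or.inl hl')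
        exact ⟨l, hlh, hlT, by simp [Set.mem_singleton_iff]; rintro rfl; exact hna i rfl⟩
  have := hmin Sm hcons hsatm hsub
  have : Lit.pos (appl i) ∈ Sm := this ▸ hi
  exact this.2 rfl

/-- The restriction of an answer set of the hard part is an answer set of `R ∪ α(X)`,
where `X` collects the applied cr-rules. -/
lemma restrict_isAnswerSet {R : Finset (Rule α)} {cr : Fin N → CrRule α} {appl : Fin N → α}
    (hf : FreshAppl R cr appl) {S : Set (Lit α)}
    (hS : IsAnswerSet (tauHard R cr appl) S) {I : Finset (Fin N)}
    (hI : ∀ i, i ∈ I ↔ Lit.pos (appl i) ∈ S) :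
    IsAnswerSet ((R : Set (Rule α)) ∪ ↑(((I.image cr)).image CrRule.alpha))
      (restrictAway appl S) := by
  obtain ⟨hc, hsat, hmin⟩ := hS
  set A : Set (Lit α) := restrictAway appl S with hA
  have hAmem : ∀ l : Lit α, l ∈ A ↔ l ∈ S ∧ NoAppl appl l := fun l => Iff.rfl
  have hsubA : A ⊆ S := fun l hl => hl.1
  have hXmem : ∀ r : Rule α, r ∈ ((I.image cr).image CrRule.alpha : Finset (Rule α)) ↔
      ∃ i ∈ I, CrRule.alpha (cr i) = r := by
    intro r
    simp only [Finset.mem_image]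
    constructor
    · rintro ⟨y, ⟨i, hi, rfl⟩, rfl⟩; exact ⟨i, hi, rfl⟩
    · rintro ⟨i, hi, rfl⟩; exact ⟨cr i, ⟨i, hi, rfl⟩, rfl⟩
  refine ⟨fun a ha => hc a ⟨ha.1.1, ha.2.1⟩, ?_, ?_⟩
  · -- satisfaction
    rintro r' ⟨r, hr, hnA, rfl⟩ ⟨hp, -⟩
    rcases hr with hr | hr
    · have hr' : r ∈ R := hr
      have hnS : ∀ l ∈ r.nbody, l ∉ S := fun l hl hls =>
        hnA l hl ⟨hls, fresh_R hf hr' (Or.inr (Or.inr hl))⟩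
      obtain ⟨l, hlh, hlS⟩ := hsat _ ⟨r, Or.inl (Or.inl hr'), hnS, rfl⟩
        ⟨fun l hl => (hp l hl).1, by simp⟩
      exact ⟨l, hlh, hlS, fresh_R hf hr' (Or.inl hlh)⟩
    · obtain ⟨i, hiI, rfl⟩ := (hXmem _).1 hr
      have hnS : ∀ l ∈ (cr i).nbody, l ∉ S := fun l hl hls =>
        hnA l hl ⟨hls, fresh_cr hf i (Or.inr (Or.inr hl))⟩
      have hpS : ∀ l ∈ (applRule cr appl i).pbody, l ∈ S := by
        intro l hl
        simp only [applRule, List.mem_cons] at hl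
        rcases hl with rfl | hl
        · exact (hI i).1 hiI
        · exact hsubA (hp l hl)
      obtain ⟨l, hlh, hlS⟩ := hsat _ ⟨applRule cr appl i, Or.inr ⟨i, rfl⟩, hnS, rfl⟩
        ⟨hpS, by simp⟩
      have hl' : l = (cr i).head := by simpa [applRule] using hlh
      rw [hl'] at hlS
      exact ⟨(cr i).head, by simp [CrRule.alpha], hlS, fresh_cr hf i (Or.inl rfl)⟩
  · -- minimality
    intro T hTc hTsat hTsub
    set T' : Set (Lit α) := T ∪ {l ∈ S | ¬ NoAppl appl l} with hT'
    have hTsubT' : T ⊆ T' := fun l hl => Or.inl hl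
    have hT'S : T' ⊆ S := by
      rintro l (hl | hl)
      · exact hsubA (hTsub hl)
      · exact hl.1
    have hmemT' : ∀ l : Lit α, NoAppl appl l → (l ∈ T' ↔ l ∈ T) := by
      intro l hno
      constructor
      · rintro (h | h)
        · exact h
        · exact absurd hno h.2
      · exact fun h => hTsubT' h
    have hT'cons : Consistent T' := fun a ha => hc a ⟨hT'S ha.1, hT'S ha.2⟩
    have hT'sat : SatAll (reduct (tauHard R cr appl) S) T' := by
      rintro r' ⟨r, hr, hnS, rfl⟩ ⟨hp, -⟩
      rcases hr with (hr | ⟨j, rfl⟩) | ⟨j, rfl⟩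
      · have hr' : r ∈ R := hr
        have hpT : ∀ l ∈ r.pbody, l ∈ T := fun l hl =>
          (hmemT' l (fresh_R hf hr' (Or.inr (Or.inl hl)))).1 (hp l hl)
        have hnA : ∀ l ∈ r.nbody, l ∉ A := fun l hl hla => hnS l hl (hsubA hla)
        obtain ⟨l, hlh, hlT⟩ := hTsat _ ⟨r, Or.inl hr', hnA, rfl⟩ ⟨hpT, by simp⟩
        exact ⟨l, hlh, hTsubT' hlT⟩
      · -- choice rule j
        have hpS : ∀ l ∈ (cr j).pbody, l ∈ S := fun l hl => hT'S (hp l hl)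
        obtain ⟨l, hlh, hlS⟩ := hsat _ ⟨choiceRule cr appl j, Or.inl (Or.inr ⟨j, rfl⟩), hnS, rfl⟩
          ⟨hpS, by simp⟩
        refine ⟨l, hlh, Or.inr ⟨hlS, ?_⟩⟩
        simp only [choiceRule, List.mem_cons, List.mem_singleton] at hlh
        rcases hlh with rfl | rfl | h
        · intro h; exact h j rfl
        · intro h; exact h j rfl
        · simp at h
      · -- appl rule j
        have hpos : Lit.pos (appl j) ∈ T' := hp _ (by simp [applRule])
        have hposS : Lit.pos (appl j) ∈ S := by
          rcases hpos with h | h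
          · exact absurd (hTsub h).2 (by intro hno; exact hno j rfl)
          · exact h.1
        have hjI : j ∈ I := (hI j).2 hposS
        have hpT : ∀ l ∈ (cr j).pbody, l ∈ T := by
          intro l hl
          have hl' : l ∈ (applRule cr appl j).pbody := by simp [applRule, hl]
          exact (hmemT' l (fresh_cr hf j (Or.inr (Or.inl hl)))).1 (hp l hl')
        have hnA : ∀ l ∈ (cr j).nbody, l ∉ A := fun l hl hla => hnS l hl (hsubA hla)
        obtain ⟨l, hlh, hlT⟩ := hTsat _
          ⟨CrRule.alpha (cr j), Or.inr ((hXmem _).2 ⟨j, hjI, rfl⟩), hnA, rfl⟩ ⟨hpT, by simp⟩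
        have hl' : l = (cr j).head := by simpa [CrRule.alpha] using hlh
        rw [hl'] at hlT
        exact ⟨(cr j).head, by simp [applRule], hTsubT' hlT⟩
    have hT'eq : T' = S := hmin T' hT'cons hT'sat hT'S
    apply Set.Subset.antisymm hTsub
    intro l hl
    have hlT' : l ∈ T' := hT'eq ▸ hl.1
    rcases hlT' with h | h
    · exact h
    · exact absurd hl.2 h.2

/-- From an answer set `T` of `R ∪ α(Y)` one can build an answer set `S'` of the
hard part of the translation whose violated weak constraints all come from `Y`. -/
lemma exists_S' {R : Finset (Rule α)} {cr : Fin N → CrRule α} {appl : Fin N → α}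
    (hf : FreshAppl R cr appl) {Y : Finset (CrRule α)}
    (hY : Y ⊆ Finset.image cr Finset.univ) {T : Set (Lit α)}
    (hT : IsAnswerSet ((R : Set (Rule α)) ∪ ↑(Y.image CrRule.alpha)) T) :
    ∃ S', IsAnswerSet (tauHard R cr appl) S' ∧
      ∀ i : Fin N, ViolatesWC S' (wcOf cr appl i) → cr i ∈ Y := by
  have hTno : ∀ l ∈ T, NoAppl appl l := noAppl_of_answerSet hf hY hT
  obtain ⟨hTc, hTsat, hTmin⟩ := hT
  set B : Fin N → Prop := fun i => (∀ l ∈ (cr i).pbody, l ∈ T) ∧ (∀ l ∈ (cr i).nbody, l ∉ T)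
    with hB
  set J : Set (Fin N) := {i | cr i ∈ Y ∧ B i} with hJ
  set K : Set (Fin N) := {i | B i ∧ i ∉ J} with hK
  set S' : Set (Lit α) := T ∪ (fun i => Lit.pos (appl i)) '' J ∪ (fun i => Lit.neg (appl i)) '' K
    with hS'
  have hsubT : T ⊆ S' := fun l hl => Or.inl (Or.inl hl)
  have hmemT : ∀ l : Lit α, NoAppl appl l → (l ∈ S' ↔ l ∈ T) := by
    intro l hno
    constructor
    · rintro ((h | ⟨i, -, rfl⟩) | ⟨i, -, rfl⟩)
      · exact h
      · exact absurd rfl (hno i)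
      · exact absurd rfl (hno i)
    · exact fun h => hsubT h
  have hpos : ∀ i : Fin N, Lit.pos (appl i) ∈ S' ↔ i ∈ J := by
    intro i
    constructor
    · rintro ((h | ⟨i', hi', he⟩) | ⟨i', -, he⟩)
      · exact absurd rfl (hTno _ h i)
      · obtain rfl : i' = i := hf.1 (by simpa [Lit.pos.injEq] using he)
        exact hi'
      · exact absurd he (by simp)
    · exact fun h => Or.inl (Or.inr ⟨i, h, rfl⟩)
  have hneg : ∀ i : Fin N, Lit.neg (appl i) ∈ S' ↔ i ∈ K := by
    intro i
    constructor
    · rintro ((h | ⟨i', -, he⟩) | ⟨i', hi', he⟩)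
      · exact absurd rfl (hTno _ h i)
      · exact absurd he (by simp)
      · obtain rfl : i' = i := hf.1 (by simpa [Lit.neg.injEq] using he)
        exact hi'
    · exact fun h => Or.inr ⟨i, h, rfl⟩
  have hBS' : ∀ i : Fin N, B i →
      (∀ l ∈ (cr i).pbody, l ∈ S') ∧ (∀ l ∈ (cr i).nbody, l ∉ S') := by
    intro i hb
    refine ⟨fun l hl => hsubT (hb.1 l hl), fun l hl hls => ?_⟩
    exact hb.2 l hl ((hmemT l (fresh_cr hf i (Or.inr (Or.inr hl)))).1 hls)
  refine ⟨S', ⟨?_, ?_, ?_⟩, ?_⟩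
  · -- consistency
    intro a ⟨hpa, hna⟩
    rcases hpa with (h | ⟨i, hi, he⟩) | ⟨i, -, he⟩
    · have hno : NoAppl appl (Lit.pos a) := hTno _ h
      have : Lit.neg a ∈ T := by
        refine (hmemT _ ?_).1 hna
        intro j hj
        exact hno j hj
      exact hTc a ⟨h, this⟩
    · obtain rfl : a = appl i := by simpa [Lit.pos.injEq, eq_comm] using he
      rcases hna with (h | ⟨i', -, he'⟩) | ⟨i', hi', he'⟩
      · exact absurd rfl (hTno _ h i)
      · exact absurd he' (by simp)
      · obtain rfl : i' = i := hf.1 (by simpa [Lit.neg.injEq] using he')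
        exact hi'.2 hi
    · exact absurd he (by simp)
  · -- satisfaction
    rintro r' ⟨r, hr, hn, rfl⟩ ⟨hp, -⟩
    rcases hr with (hr | ⟨j, rfl⟩) | ⟨j, rfl⟩
    · have hr' : r ∈ R := hr
      have hpT : ∀ l ∈ r.pbody, l ∈ T := fun l hl =>
        (hmemT l (fresh_R hf hr' (Or.inr (Or.inl hl)))).1 (hp l hl)
      have hnT : ∀ l ∈ r.nbody, l ∉ T := fun l hl hlt => hn l hl (hsubT hlt)
      obtain ⟨l, hlh, hlT⟩ := hTsat _ ⟨r, Or.inl hr', hnT, rfl⟩ ⟨hpT, by simp⟩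
      exact ⟨l, hlh, hsubT hlT⟩
    · -- choice rule j
      have hb : B j := by
        constructor
        · intro l hl
          exact (hmemT l (fresh_cr hf j (Or.inr (Or.inl hl)))).1 (hp l hl)
        · exact fun l hl hlt => hn l hl (hsubT hlt)
      by_cases hj : cr j ∈ Y
      · exact ⟨Lit.pos (appl j), by simp [choiceRule], (hpos j).2 ⟨hj, hb⟩⟩
      · refine ⟨Lit.neg (appl j), by simp [choiceRule], (hneg j).2 ⟨hb, fun h => hj h.1⟩⟩
    · -- appl rule j
      have hposj : Lit.pos (appl j) ∈ S' := hp _ (by simp [applRule])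
      obtain ⟨hjY, hb⟩ : cr j ∈ Y ∧ B j := (hpos j).1 hposj
      have hnT : ∀ l ∈ (cr j).nbody, l ∉ T := hb.2
      have hpT : ∀ l ∈ (cr j).pbody, l ∈ T := hb.1
      obtain ⟨l, hlh, hlT⟩ := hTsat _
        ⟨CrRule.alpha (cr j), Or.inr (by exact_mod_cast Finset.mem_image_of_mem _ hjY),
          hnT, rfl⟩ ⟨hpT, by simp⟩
      have hl' : l = (cr j).head := by simpa [CrRule.alpha] using hlh
      rw [hl'] at hlT
      exact ⟨(cr j).head, by simp [applRule], hsubT hlT⟩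
  · -- minimality
    intro U hUc hUsat hUsub
    set U₀ : Set (Lit α) := {l ∈ U | NoAppl appl l} with hU₀
    have hU₀U : U₀ ⊆ U := fun l hl => hl.1
    have hU₀T : U₀ ⊆ T := fun l hl => (hmemT l hl.2).1 (hUsub hl.1)
    have hU₀cons : Consistent U₀ := fun a ha => hUc a ⟨ha.1.1, ha.2.1⟩
    have hchoice : ∀ j : Fin N, B j → (∀ l ∈ (cr j).pbody, l ∈ U) →
        Lit.pos (appl j) ∈ U ∨ Lit.neg (appl j) ∈ U := by
      intro j hb hpU
      have hnS' : ∀ l ∈ (choiceRule cr appl j).nbody, l ∉ S' := (hBS' j hb).2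
      obtain ⟨l, hlh, hlU⟩ := hUsat _
        ⟨choiceRule cr appl j, Or.inl (Or.inr ⟨j, rfl⟩), hnS', rfl⟩ ⟨hpU, by simp⟩
      simp only [choiceRule, List.mem_cons, List.mem_singleton] at hlh
      rcases hlh with rfl | rfl | h
      · exact Or.inl hlU
      · exact Or.inr hlU
      · simp at h
    have hU₀sat : SatAll (reduct ((R : Set (Rule α)) ∪ ↑(Y.image CrRule.alpha)) T) U₀ := by
      rintro r' ⟨r, hr, hnT, rfl⟩ ⟨hp, -⟩
      rcases hr with hr | hr
      · have hr' : r ∈ R := hr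
        have hnS' : ∀ l ∈ r.nbody, l ∉ S' := fun l hl hls =>
          hnT l hl ((hmemT l (fresh_R hf hr' (Or.inr (Or.inr hl)))).1 hls)
        obtain ⟨l, hlh, hlU⟩ := hUsat _ ⟨r, Or.inl (Or.inl hr'), hnS', rfl⟩
          ⟨fun l hl => hU₀U (hp l hl), by simp⟩
        exact ⟨l, hlh, hlU, fresh_R hf hr' (Or.inl hlh)⟩
      · obtain ⟨y, hy, rfl⟩ := by simpa using hr
        obtain ⟨j, -, rfl⟩ := by simpa using hY hy
        have hpT : ∀ l ∈ (cr j).pbody, l ∈ T := fun l hl => hU₀T (hp l hl)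
        have hb : B j := ⟨hpT, hnT⟩
        have hjJ : j ∈ J := ⟨hy, hb⟩
        have hposU : Lit.pos (appl j) ∈ U := by
          rcases hchoice j hb (fun l hl => hU₀U (hp l hl)) with h | h
          · exact h
          · have : j ∈ K := (hneg j).1 (hUsub h)
            exact absurd hjJ this.2
        have hnS' : ∀ l ∈ (applRule cr appl j).nbody, l ∉ S' := (hBS' j hb).2
        have hpU : ∀ l ∈ (applRule cr appl j).pbody, l ∈ U := by
          intro l hl
          simp only [applRule, List.mem_cons] at hl
          rcases hl with rfl | hl
          · exact hposU
          · exact hU₀U (hp l hl)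
        obtain ⟨l, hlh, hlU⟩ := hUsat _ ⟨applRule cr appl j, Or.inr ⟨j, rfl⟩, hnS', rfl⟩
          ⟨hpU, by simp⟩
        have hl' : l = (cr j).head := by simpa [applRule] using hlh
        rw [hl'] at hlU
        exact ⟨(cr j).head, by simp [CrRule.alpha], hlU, fresh_cr hf j (Or.inl rfl)⟩
    have hU₀eq : U₀ = T := hTmin U₀ hU₀cons hU₀sat hU₀T
    apply Set.Subset.antisymm hUsub
    rintro l ((hl | ⟨j, hjJ, rfl⟩) | ⟨j, hjK, rfl⟩)
    · exact hU₀U (hU₀eq ▸ hl)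
    · have hpU : ∀ l ∈ (cr j).pbody, l ∈ U := fun l hl =>
        hU₀U (hU₀eq ▸ (hjJ.2.1 l hl))
      rcases hchoice j hjJ.2 hpU with h | h
      · exact h
      · have : j ∈ K := (hneg j).1 (hUsub h)
        exact absurd hjJ this.2
    · have hpU : ∀ l ∈ (cr j).pbody, l ∈ U := fun l hl =>
        hU₀U (hU₀eq ▸ (hjK.1.1 l hl))
      rcases hchoice j hjK.1 hpU with h | h
      · have : j ∈ J := (hpos j).1 (hUsub h)
        exact absurd this hjK.2
      · exact h
  · -- violated constraints come from Y
    intro i hv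
    have : Lit.pos (appl i) ∈ S' := hv.1 _ (by simp [wcOf])
    exact ((hpos i).1 this).1

end Helpers

/-- If `S` is an answer set of the weak-constraint translation τ(Π)
of the finite ground CR-program Π = (R, CR), then the set of literals of `S` not formed
from any of the fresh atoms `appl 1, …, appl N` is an answer set of Π. -/
theorem translation_answerSet_restrict_isCrAnswerSet
    {α : Type} [DecidableEq α] [Countable α] {N : ℕ}
    (R : Finset (Rule α)) (cr : Fin N → CrRule α) (hcr : Function.Injective cr)
    (appl : Fin N → α) (hfresh : FreshAppl R cr appl)
    (S : Set (Lit α))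
    (hS : IsWcAnswerSet (tauHard R cr appl) (tauWeak cr appl) S) :
    IsCrAnswerSet R (Finset.image cr Finset.univ) (restrictAway appl S) := by
  classical
  obtain ⟨hSas, hSopt⟩ := hS
  set I : Finset (Fin N) := Finset.univ.filter (fun i => Lit.pos (appl i) ∈ S) with hIdef
  have hI : ∀ i, i ∈ I ↔ Lit.pos (appl i) ∈ S := by
    intro i; simp [hIdef]
  have hA := restrict_isAnswerSet hfresh hSas hI
  -- the number of violated weak constraints of S equals |I|
  have hvS : violatedCount (tauWeak cr appl) S = I.card := by
    rw [violatedCount_tauWeak hfresh.1]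
    have hset : {i : Fin N | ViolatesWC S (wcOf cr appl i)} = ↑I := by
      ext i
      simp only [Set.mem_setOf_eq, Finset.coe_filter, Finset.mem_coe, hI]
      constructor
      · intro hv
        exact hv.1 _ (by simp [wcOf])
      · intro hiS
        obtain ⟨hpb, hnb⟩ := bodySat_of_pos hfresh ⟨hSas.1, hSas.2.1, hSas.2.2⟩ hiS
        refine ⟨?_, ?_⟩
        · intro l hl
          simp only [wcOf, List.mem_cons] at hl
          rcases hl with rfl | hl
          · exact hiS
          · exact hpb l hl
        · intro l hl
          exact hnb l hl
    rw [hset, Set.ncard_coe_finset]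
  refine ⟨I.image cr, ⟨Finset.image_subset_image (Finset.subset_univ I), ⟨_, hA⟩, ?_⟩, hA⟩
  intro Y hY ⟨T, hT⟩
  obtain ⟨S', hS'as, hS'v⟩ := exists_S' hfresh hY hT
  have hcard : (I.image cr).card = I.card := Finset.card_image_of_injective I hcr
  have h1 : violatedCount (tauWeak cr appl) S ≤ violatedCount (tauWeak cr appl) S' :=
    hSopt S' hS'as
  have h2 : violatedCount (tauWeak cr appl) S' ≤ Y.card := by
    rw [violatedCount_tauWeak hfresh.1]
    have hsub : {i : Fin N | ViolatesWC S' (wcOf cr appl i)} ⊆ {i : Fin N | cr i ∈ Y} :=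
      fun i hi => hS'v i hi
    calc {i : Fin N | ViolatesWC S' (wcOf cr appl i)}.ncard
        ≤ {i : Fin N | cr i ∈ Y}.ncard := Set.ncard_le_ncard hsub (Set.toFinite _)
      _ = (cr '' {i : Fin N | cr i ∈ Y}).ncard :=
          (Set.ncard_image_of_injective _ hcr).symm
      _ ≤ (↑Y : Set (CrRule α)).ncard := by
          refine Set.ncard_le_ncard ?_ (Set.toFinite _)
          rintro y ⟨i, hi, rfl⟩
          exact hi
      _ = Y.card := Set.ncard_coe_finset Y
  omega
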